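/- Let B > 0, s ≥ 0 and t ∈ ℝ. If G : ℝ² → [0, ∞) is measurable, satisfies G(x_⊥) ≤ (B/(2π)) s for almost every x_⊥ ∈ ℝ², and ∫_{ℝ²} G(x_⊥) dx_⊥ ≤ s, then ∫_{ℝ²} G(x_⊥) / √(|x_⊥|² + t²) dx_⊥ ≤ s · V_L^B(t). -/

import Mathlib

/-! The weight `w x = (‖x‖² + t²)^(-1/2)` is a decreasing function of `‖x‖`, so among densities
`0 ≤ G ≤ M := B s / (2π)` of mass at most `s` the integral `∫ G w` is largest for
`G⋆ = M 𝟙_{‖x‖ ≤ R}` with `π R² M = s`, i.e. `R² = 2 / B` (bathtub principle). Indeed, with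
`c := w` on the sphere `‖x‖ = R`, pointwise `(G - G⋆)(w - c) ≤ 0`, and integrating gives
`∫ G w - ∫ G⋆ w ≤ c (∫ G - s) ≤ 0`. In polar coordinates
`∫ G⋆ w = 2π M (√(R² + t²) - |t|) = B s (√(2/B + t²) - |t|) = s V_L^B(t)`. -/

open MeasureTheory Real Filter

noncomputable section


/-- The potential `V_L^B(t) = 2 / (√(2/B + t²) + |t|)`. -/
def VL (B : ℝ) (t : ℝ) : ℝ := 2 / (Real.sqrt (2 / B + t ^ 2) + |t|)

open Set Metric
open scoped ENNReal

local notation "ℝ²" => EuclideanSpace ℝ (Fin 2)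

theorem lintegral_mul_le_const_mul_setLIntegral {X : Type*} [MeasurableSpace X] {μ : Measure X}
    {f w : X → ℝ≥0∞} {S : Set X} {M c : ℝ≥0∞} (hf : AEMeasurable f μ) (hw : AEMeasurable w μ)
    (hS : MeasurableSet S) (hfM : ∀ᵐ x ∂μ, f x ≤ M) (hf_int : ∫⁻ x, f x ∂μ ≤ M * μ S)
    (hwS : ∀ x ∈ S, c ≤ w x) (hwSc : ∀ x ∉ S, w x ≤ c) :
    ∫⁻ x, f x * w x ∂μ ≤ M * ∫⁻ x in S, w x ∂μ := by
  have hcS : M * (c * μ S) ≤ M * ∫⁻ x in S, w x ∂μ := by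
    rw [← setLIntegral_const]
    exact mul_le_mul_right (setLIntegral_mono' hS hwS) M
  by_cases hfin : M * (c * μ S) = ⊤
  · exact le_top.trans (hfin ▸ hcS)
  -- Integrate `(f - M 𝟙_S) (w - c) ≤ 0`, written without subtraction.
  have hpt : ∀ᵐ x ∂μ, f x * w x + S.indicator (fun _ ↦ c * M) x ≤
      S.indicator (fun x ↦ M * w x) x + c * f x := by
    filter_upwards [hfM] with x hfx
    by_cases hx : x ∈ S
    · obtain ⟨d, rfl⟩ := le_iff_exists_add.1 hfx
      simp only [indicator_of_mem hx]
      calc f x * w x + c * (f x + d) = f x * w x + c * f x + d * c := by ring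
        _ ≤ f x * w x + c * f x + d * w x := by gcongr; exact hwS x hx
        _ = (f x + d) * w x + c * f x := by ring
    · simp only [indicator_of_notMem hx, add_zero, zero_add]
      rw [mul_comm c]
      gcongr
      exact hwSc x hx
  have hint := lintegral_mono_ae hpt
  rw [lintegral_add_right' _ (aemeasurable_const.indicator hS),
    lintegral_add_right' _ (hf.const_mul c), lintegral_indicator_const hS,
    lintegral_indicator hS, lintegral_const_mul'' c hf,
    lintegral_const_mul'' M hw.restrict] at hint
  have hbound : ∫⁻ x, f x * w x ∂μ + M * (c * μ S) ≤ M * ∫⁻ x in S, w x ∂μ + M * (c * μ S) :=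
    calc ∫⁻ x, f x * w x ∂μ + M * (c * μ S) = ∫⁻ x, f x * w x ∂μ + c * M * μ S := by ring
      _ ≤ M * ∫⁻ x in S, w x ∂μ + c * ∫⁻ x, f x ∂μ := hint
      _ ≤ M * ∫⁻ x in S, w x ∂μ + c * (M * μ S) := by gcongr
      _ = M * ∫⁻ x in S, w x ∂μ + M * (c * μ S) := by ring
  exact (ENNReal.add_le_add_iff_right hfin).1 hbound

theorem lintegral_fun_norm_addHaar {E : Type*} [NormedAddCommGroup E] [NormedSpace ℝ E]
    [FiniteDimensional ℝ E] [MeasurableSpace E] [BorelSpace E] [Nontrivial E]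
    (μ : Measure E) [μ.IsAddHaarMeasure] {f : ℝ → ℝ≥0∞} (hf : Measurable f) :
    ∫⁻ x, f ‖x‖ ∂μ = Module.finrank ℝ E * μ (ball 0 1) *
      ∫⁻ y in Ioi 0, ENNReal.ofReal (y ^ (Module.finrank ℝ E - 1)) * f y := by
  have hf' : Measurable fun y : Ioi (0 : ℝ) ↦ f y := hf.comp measurable_subtype_coe
  calc ∫⁻ x, f ‖x‖ ∂μ = ∫⁻ x : ({0}ᶜ : Set E), f ‖x.1‖ ∂(μ.comap (↑)) := by
        rw [lintegral_subtype_comap (measurableSet_singleton _).compl (fun x : E ↦ f ‖x‖),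
          restrict_compl_singleton]
    _ = ∫⁻ x, f x.2 ∂μ.toSphere.prod (.volumeIoiPow (Module.finrank ℝ E - 1)) := by
        simpa using μ.measurePreserving_homeomorphUnitSphereProd.lintegral_comp_emb
          (Homeomorph.measurableEmbedding _) (f ∘ Subtype.val ∘ Prod.snd)
    _ = μ.toSphere univ * ∫⁻ y : Ioi (0:ℝ), f y ∂.volumeIoiPow (Module.finrank ℝ E - 1) := by
        rw [← lintegral_map hf' measurable_snd, Measure.map_snd_prod, lintegral_smul_measure,
          smul_eq_mul]
    _ = _ := by
        rw [Measure.toSphere_apply_univ, Measure.volumeIoiPow,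
          lintegral_withDensity_eq_lintegral_mul _
            (measurable_subtype_coe.pow_const _).ennreal_ofReal hf',
          ← lintegral_subtype_comap measurableSet_Ioi
            (fun y ↦ ENNReal.ofReal (y ^ (Module.finrank ℝ E - 1)) * f y)]
        rfl

theorem lintegral_Ioc_div_sqrt_sq_add_sq {R : ℝ} (hR : 0 ≤ R) (t : ℝ) :
    ∫⁻ y in Ioc 0 R, ENNReal.ofReal (y / √(y ^ 2 + t ^ 2)) =
      ENNReal.ofReal (√(R ^ 2 + t ^ 2) - |t|) := by
  have hcont : ContinuousOn (fun y : ℝ ↦ √(y ^ 2 + t ^ 2)) (Icc 0 R) := by fun_prop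
  have hderiv : ∀ y ∈ Ioo 0 R, HasDerivAt (fun y : ℝ ↦ √(y ^ 2 + t ^ 2))
      (y / √(y ^ 2 + t ^ 2)) y := by
    intro y hy
    have hpos : 0 < y ^ 2 + t ^ 2 := by have := hy.1; positivity
    convert ((hasDerivAt_pow 2 y).add_const (t ^ 2)).sqrt hpos.ne' using 1
    field_simp
    ring
  have hnonneg : ∀ y ∈ Ioc 0 R, 0 ≤ y / √(y ^ 2 + t ^ 2) := fun y hy ↦
    div_nonneg hy.1.le (sqrt_nonneg _)
  have hint : IntegrableOn (fun y ↦ y / √(y ^ 2 + t ^ 2)) (Ioc 0 R) :=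
    intervalIntegral.integrableOn_deriv_of_nonneg hcont hderiv
      fun y hy ↦ hnonneg y (Ioo_subset_Ioc_self hy)
  rw [← ofReal_integral_eq_lintegral_ofReal hint
      ((ae_restrict_iff' measurableSet_Ioc).2 (ae_of_all _ hnonneg)),
    ← intervalIntegral.integral_of_le hR,
    intervalIntegral.integral_eq_sub_of_hasDerivAt_of_le hR hcont hderiv
      ((intervalIntegrable_iff_integrableOn_Ioc_of_le hR).2 hint)]
  simp [sqrt_sq_eq_abs]

theorem setLIntegral_closedBall_inv_sqrt_norm_sq_add_sq {R : ℝ} (hR : 0 ≤ R) (t : ℝ) :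
    ∫⁻ x in closedBall (0 : ℝ²) R, (ENNReal.ofReal √(‖x‖ ^ 2 + t ^ 2))⁻¹ =
      ENNReal.ofReal (2 * π * (√(R ^ 2 + t ^ 2) - |t|)) := by
  set g : ℝ → ℝ≥0∞ := fun y ↦ (ENNReal.ofReal √(y ^ 2 + t ^ 2))⁻¹
  have hball : (closedBall (0 : ℝ²) R).indicator (fun x ↦ g ‖x‖) =
      fun x ↦ (Iic R).indicator g ‖x‖ := by
    ext x
    by_cases hx : ‖x‖ ≤ R <;> simp [hx]
  have hradial : ∫⁻ y in Ioi 0, ENNReal.ofReal (y ^ (2 - 1)) * (Iic R).indicator g y =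
      ∫⁻ y in Ioc 0 R, ENNReal.ofReal (y / √(y ^ 2 + t ^ 2)) := by
    calc _ = ∫⁻ y in Ioi 0, (Iic R).indicator (fun y ↦ ENNReal.ofReal y * g y) y := by
          simp only [indicator_apply, Nat.add_one_sub_one, pow_one, mul_ite, mul_zero]
      _ = ∫⁻ y in Ioc 0 R, ENNReal.ofReal y * g y := by
          rw [setLIntegral_indicator measurableSet_Iic, inter_comm, Ioi_inter_Iic]
      _ = _ := setLIntegral_congr_fun measurableSet_Ioc fun y hy ↦ by
          have : 0 < √(y ^ 2 + t ^ 2) := sqrt_pos.2 (by have := hy.1; positivity)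
          rw [ENNReal.ofReal_div_of_pos this, div_eq_mul_inv]
  rw [← lintegral_indicator measurableSet_closedBall, hball,
    lintegral_fun_norm_addHaar volume (by measurability), finrank_euclideanSpace_fin,
    EuclideanSpace.volume_ball_fin_two, hradial, lintegral_Ioc_div_sqrt_sq_add_sq hR,
    ENNReal.ofReal_one, one_pow, one_mul, Nat.cast_ofNat,
    ← ENNReal.ofReal_ofNat 2, ← ENNReal.ofReal_mul zero_le_two,
    ← ENNReal.ofReal_mul (by positivity)]

theorem VL_eq_mul_sub {B : ℝ} (hB : 0 < B) (t : ℝ) : VL B t = B * (√(2 / B + t ^ 2) - |t|) := by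
  have hsq : √(2 / B + t ^ 2) ^ 2 = 2 / B + t ^ 2 := sq_sqrt (by positivity)
  have hpos : 0 < √(2 / B + t ^ 2) + |t| :=
    add_pos_of_pos_of_nonneg (sqrt_pos.2 (by positivity)) (abs_nonneg t)
  have hB' : B * (2 / B) = 2 := mul_div_cancel₀ 2 hB.ne'
  rw [VL, div_eq_iff hpos.ne']
  linear_combination (-B) * hsq + B * sq_abs t - hB'

theorem bathtub_bound_general (B s t : ℝ) (hB : 0 < B)
    (G : EuclideanSpace ℝ (Fin 2) → ℝ) (hGmeas : Measurable G)
    (hGbound : ∀ᵐ x : EuclideanSpace ℝ (Fin 2) ∂(volume : Measure (EuclideanSpace ℝ (Fin 2))),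
      G x ≤ B / (2 * π) * s)
    (hGint : (∫⁻ x : EuclideanSpace ℝ (Fin 2), ENNReal.ofReal (G x)) ≤ ENNReal.ofReal s) :
    (∫⁻ x : EuclideanSpace ℝ (Fin 2), ENNReal.ofReal (G x / Real.sqrt (‖x‖ ^ 2 + t ^ 2))) ≤
      ENNReal.ofReal (s * VL B t) := by
  set R := √(2 / B)
  have hRsq : R ^ 2 = 2 / B := sq_sqrt (by positivity)
  have hmass :
      ENNReal.ofReal s = ENNReal.ofReal (B / (2 * π) * s) * volume (closedBall (0 : ℝ²) R) := by
    rw [EuclideanSpace.volume_closedBall_fin_two, ← ENNReal.ofReal_pow (sqrt_nonneg _), hRsq,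
      ← ENNReal.ofReal_mul' pi_pos.le, ← ENNReal.ofReal_mul' (by positivity)]
    congr 1
    field_simp
  have hlevel (x : ℝ²) : ‖x‖ ≤ R ↔ ‖x‖ ^ 2 + t ^ 2 ≤ 2 / B + t ^ 2 := by
    rw [← hRsq, add_le_add_iff_right,
      pow_le_pow_iff_left₀ (norm_nonneg x) (sqrt_nonneg _) two_ne_zero]
  calc (∫⁻ x, ENNReal.ofReal (G x / √(‖x‖ ^ 2 + t ^ 2)))
      ≤ ∫⁻ x, ENNReal.ofReal (G x) * (ENNReal.ofReal √(‖x‖ ^ 2 + t ^ 2))⁻¹ :=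
        lintegral_mono fun x ↦
          (ENNReal.ofReal_div_le (sqrt_nonneg _)).trans_eq (div_eq_mul_inv _ _)
    _ ≤ ENNReal.ofReal (B / (2 * π) * s) * ∫⁻ x in closedBall (0 : ℝ²) R,
          (ENNReal.ofReal √(‖x‖ ^ 2 + t ^ 2))⁻¹ := by
        refine lintegral_mul_le_const_mul_setLIntegral
          (c := (ENNReal.ofReal √(2 / B + t ^ 2))⁻¹)
          hGmeas.ennreal_ofReal.aemeasurable (by fun_prop) measurableSet_closedBall
          (hGbound.mono fun x hx ↦ ENNReal.ofReal_le_ofReal hx) (hmass ▸ hGint)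
          (fun x hx ↦ ?_) (fun x hx ↦ ?_)
        · rw [mem_closedBall_zero_iff, hlevel] at hx
          exact ENNReal.inv_le_inv.2 (ENNReal.ofReal_le_ofReal (sqrt_le_sqrt hx))
        · rw [mem_closedBall_zero_iff, hlevel, not_le] at hx
          exact ENNReal.inv_le_inv.2 (ENNReal.ofReal_le_ofReal (sqrt_le_sqrt hx.le))
    _ = ENNReal.ofReal (s * VL B t) := by
        have habs : |t| ≤ √(2 / B + t ^ 2) :=
          abs_le_sqrt (le_add_of_nonneg_left (by positivity))
        rw [setLIntegral_closedBall_inv_sqrt_norm_sq_add_sq (sqrt_nonneg _), hRsq,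
          ← ENNReal.ofReal_mul' (mul_nonneg (by positivity) (sub_nonneg.2 habs)),
          VL_eq_mul_sub hB]
        congr 1
        field_simp

/-- **The bathtub principle bound:** if `0 ≤ G ≤ (B/2π) s` a.e. and `∫ G ≤ s`, then
`∫ G(x_⊥)/√(|x_⊥|² + t²) dx_⊥ ≤ s · V_L^B(t)`. -/
theorem bathtub_bound (B s t : ℝ) (hB : 0 < B) (hs : 0 ≤ s)
    (G : EuclideanSpace ℝ (Fin 2) → ℝ) (hGmeas : Measurable G) (hGnonneg : ∀ x, 0 ≤ G x)
    (hGbound : ∀ᵐ x : EuclideanSpace ℝ (Fin 2) ∂(volume : Measure (EuclideanSpace ℝ (Fin 2))),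
      G x ≤ B / (2 * π) * s)
    (hGint : (∫⁻ x : EuclideanSpace ℝ (Fin 2), ENNReal.ofReal (G x)) ≤ ENNReal.ofReal s) :
    (∫⁻ x : EuclideanSpace ℝ (Fin 2), ENNReal.ofReal (G x / Real.sqrt (‖x‖ ^ 2 + t ^ 2))) ≤
      ENNReal.ofReal (s * VL B t) :=
  bathtub_bound_general B s t hB G hGmeas hGbound hGint
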